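/- arXiv:1203.5581 — 2 statements merged into one kernel-verified Lean document; each statement's English description precedes it below -/
import Mathlib

section
/- Small-ε expansion of the fourth moment: for every natural number N ≥ 1, the fourth moment m₄(N), regarded as a function of ε, is a polynomial in ε, and there exists a polynomial function R : ℝ → ℝ such that m₄(N) = N(3N−2) + 4N(N−1)(3N−4)·ε + (4/3)·N(N−1)(N−2)(21N−43)·ε² + ε³·R(ε) for all ε ∈ ℝ. -/
/-- The discrete stochastic process with memory: binomial transfer probabilities
with coupling `ε`. -/
noncomputable def P (ε : ℝ) : ℕ → ℤ → ℝ
  | 0, x => if x = 0 then 1 else 0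
  | n + 1, x =>
      P ε n (x + 1) * (1 / 2 - ((x : ℝ) + 1) * ε) +
      P ε n (x - 1) * (1 / 2 + ((x : ℝ) - 1) * ε)

/-- The `k`-th moment `m_k(n; ε) = Σ_{x ∈ ℤ} x^k · P(n, x)` (depending on `ε` through `P`). -/
noncomputable def m (ε : ℝ) (k n : ℕ) : ℝ := ∑' x : ℤ, (x : ℝ) ^ k * P ε n x

/-!
Summing the recurrence for `P` against a test function `f` and shifting the index moves the step
onto `f`: `Σ f(x) P(n+1, x) = Σ (f(y-1)(1/2 - yε) + f(y+1)(1/2 + yε)) P(n, y)`.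
For `f = x^2` and `f = x^4` this closes up into the linear recurrences
`m₂(n+1) = (1+4ε) m₂(n) + 1` and `m₄(n+1) = (1+8ε) m₄(n) + (6+8ε) m₂(n) + 1`, and induction on `n`
tracks the coefficients of `1, ε, ε²` while the remainder stays a polynomial multiple of `ε³`.
-/

open Polynomial

section Moments

variable (ε : ℝ) (n : ℕ)

lemma P_eq_zero_of_lt_natAbs {x : ℤ} (hx : n < x.natAbs) : P ε n x = 0 := by
  induction n generalizing x with
  | zero => simp only [P]; rw [if_neg (by omega)]
  | succ n ih =>
    simp only [P]
    rw [ih (by omega), ih (by omega)]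
    ring

lemma summable_mul_P (f : ℤ → ℝ) : Summable fun x => f x * P ε n x :=
  summable_of_ne_finset_zero (s := Finset.Icc (-(n : ℤ)) n) fun x hx => by
    rw [P_eq_zero_of_lt_natAbs ε n (by simp only [Finset.mem_Icc] at hx; omega), mul_zero]

lemma tsum_add_mul_P (f g : ℤ → ℝ) :
    ∑' x, (f x + g x) * P ε n x = ∑' x, f x * P ε n x + ∑' x, g x * P ε n x := by
  simp only [add_mul]
  exact (summable_mul_P ε n f).tsum_add (summable_mul_P ε n g)

lemma tsum_const_mul_mul_P (c : ℝ) (f : ℤ → ℝ) :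
    ∑' x, c * f x * P ε n x = c * ∑' x, f x * P ε n x := by
  simp only [mul_assoc, tsum_mul_left]

lemma tsum_mul_P_succ (f : ℤ → ℝ) :
    ∑' x, f x * P ε (n + 1) x =
      ∑' y, (f (y - 1) * (1 / 2 - y * ε) + f (y + 1) * (1 / 2 + y * ε)) * P ε n y := by
  let g₁ : ℤ → ℝ := fun y => f (y - 1) * (1 / 2 - y * ε) * P ε n y
  let g₂ : ℤ → ℝ := fun y => f (y + 1) * (1 / 2 + y * ε) * P ε n y
  have h₁ : Summable g₁ := summable_mul_P ε n _
  have h₂ : Summable g₂ := summable_mul_P ε n _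
  calc ∑' x, f x * P ε (n + 1) x = ∑' x, (g₁ (x + 1) + g₂ (x - 1)) :=
        tsum_congr fun x => by
          simp only [g₁, g₂, P, add_sub_cancel_right, sub_add_cancel]; push_cast; ring
    _ = ∑' y, g₁ y + ∑' y, g₂ y := by
        have h₁' : Summable fun x => g₁ (x + 1) :=
          ((Equiv.addRight (1 : ℤ)).summable_iff (f := g₁)).mpr h₁
        have h₂' : Summable fun x => g₂ (x - 1) :=
          ((Equiv.subRight (1 : ℤ)).summable_iff (f := g₂)).mpr h₂
        rw [h₁'.tsum_add h₂']
        exact congrArg₂ (· + ·) ((Equiv.addRight 1).tsum_eq g₁) ((Equiv.subRight 1).tsum_eq g₂)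
    _ = _ := by rw [← h₁.tsum_add h₂]; exact tsum_congr fun y => by simp only [g₁, g₂]; ring

lemma m_zero_eq_one : m ε 0 n = 1 := by
  induction n with
  | zero => simp [m, P]
  | succ n ih =>
    rw [m, tsum_mul_P_succ]
    convert ih using 1
    exact tsum_congr fun y => by ring

lemma m_zero_of_ne_zero {k : ℕ} (hk : k ≠ 0) : m ε k 0 = 0 := by
  simp [m, P, hk]

lemma m_two_succ : m ε 2 (n + 1) = (1 + 4 * ε) * m ε 2 n + 1 := by
  calc m ε 2 (n + 1) = ∑' y : ℤ, ((1 + 4 * ε) * (y : ℝ) ^ 2 + (y : ℝ) ^ 0) * P ε n y := by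
        rw [m, tsum_mul_P_succ]; exact tsum_congr fun y => by push_cast; ring
    _ = _ := by rw [tsum_add_mul_P, tsum_const_mul_mul_P, ← m, ← m, m_zero_eq_one]

lemma m_four_succ :
    m ε 4 (n + 1) = (1 + 8 * ε) * m ε 4 n + (6 + 8 * ε) * m ε 2 n + 1 := by
  calc m ε 4 (n + 1) = ∑' y : ℤ, ((1 + 8 * ε) * (y : ℝ) ^ 4 + (6 + 8 * ε) * (y : ℝ) ^ 2
        + (y : ℝ) ^ 0) * P ε n y := by
        rw [m, tsum_mul_P_succ]; exact tsum_congr fun y => by push_cast; ring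
    _ = _ := by
        rw [tsum_add_mul_P, tsum_add_mul_P, tsum_const_mul_mul_P, tsum_const_mul_mul_P,
          ← m, ← m, ← m, m_zero_eq_one]

end Moments

lemma exists_m_two_expansion (n : ℕ) :
    ∃ R : ℝ[X], ∀ ε : ℝ,
      m ε 2 n = n + 2 * n * (n - 1) * ε + (8 / 3) * n * (n - 1) * (n - 2) * ε ^ 2 +
        ε ^ 3 * R.eval ε := by
  induction n with
  | zero => exact ⟨0, fun ε => by simp [m_zero_of_ne_zero]⟩
  | succ n ih =>
    obtain ⟨R, hR⟩ := ih
    refine ⟨(1 + 4 * X) * R + C (32 / 3 * n * (n - 1) * (n - 2) : ℝ), fun ε => ?_⟩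
    rw [m_two_succ, hR]
    simp only [eval_add, eval_mul, eval_C, eval_X, eval_one, eval_ofNat]
    push_cast
    ring

theorem fourth_moment_small_eps_expansion_general (N : ℕ) :
    ∃ R : Polynomial ℝ, ∀ ε : ℝ,
      m ε 4 N =
        (N : ℝ) * (3 * (N : ℝ) - 2) +
          4 * (N : ℝ) * ((N : ℝ) - 1) * (3 * (N : ℝ) - 4) * ε +
          (4 / 3) * (N : ℝ) * ((N : ℝ) - 1) * ((N : ℝ) - 2) * (21 * (N : ℝ) - 43) * ε ^ 2 +
          ε ^ 3 * R.eval ε := by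
  induction N with
  | zero => exact ⟨0, fun ε => by simp [m_zero_of_ne_zero]⟩
  | succ n ih =>
    obtain ⟨R₄, hR₄⟩ := ih
    obtain ⟨R₂, hR₂⟩ := exists_m_two_expansion n
    refine ⟨(1 + 8 * X) * R₄ + (6 + 8 * X) * R₂ +
      C (32 / 3 * n * (n - 1) * (n - 2) * (21 * n - 43) + 64 / 3 * n * (n - 1) * (n - 2) : ℝ),
      fun ε => ?_⟩
    rw [m_four_succ, hR₄, hR₂]
    simp only [eval_add, eval_mul, eval_C, eval_X, eval_one, eval_ofNat]
    push_cast
    ring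

/-- small-`ε` expansion of the fourth moment. For `N ≥ 1`, `m₄(N)` is a
polynomial in `ε`:
`m₄(N) = N(3N−2) + 4N(N−1)(3N−4)·ε + (4/3)·N(N−1)(N−2)(21N−43)·ε² + ε³·R(ε)`
with `R` a polynomial. -/
theorem fourth_moment_small_eps_expansion (N : ℕ) (hN : 1 ≤ N) :
    ∃ R : Polynomial ℝ, ∀ ε : ℝ,
      m ε 4 N =
        (N : ℝ) * (3 * (N : ℝ) - 2) +
          4 * (N : ℝ) * ((N : ℝ) - 1) * (3 * (N : ℝ) - 4) * ε +
          (4 / 3) * (N : ℝ) * ((N : ℝ) - 1) * ((N : ℝ) - 2) * (21 * (N : ℝ) - 43) * ε ^ 2 +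
          ε ^ 3 * R.eval ε :=
  fourth_moment_small_eps_expansion_general N
end

section
/- Exact auto-correlation of increments: for all natural numbers n, L, N with L ≥ 2 and n + L ≤ N, Σ over paths s ∈ {−1, +1}^N of s_{n+1} · s_{n+L} · W(s) equals 2ε · (1 + 2ε)^{L−2} · (1 + 2ε · m₂(n)), where m₂(n) = Σ_{x ∈ ℤ} x² · P(n, x). -/
/-- A single step of a binary path: `+1` or `−1`. -/
def step (b : Bool) : ℤ := if b then 1 else -1

/-- The displacement after `k` steps: `x_k(s) = s_1 + ⋯ + s_k` (with `x_0(s) = 0`). -/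
def pos {N : ℕ} (s : Fin N → Bool) (k : ℕ) : ℤ :=
  ∑ j ∈ Finset.univ.filter (fun j : Fin N => (j : ℕ) < k), step (s j)

/-- The weight of a path: `W(s) = Π_{k=0}^{N−1} (1/2 + x_k(s) · ε · s_{k+1})`. -/
noncomputable def W (ε : ℝ) {N : ℕ} (s : Fin N → Bool) : ℝ :=
  ∏ k : Fin N, (1 / 2 + (pos s (k : ℕ) : ℝ) * ε * (step (s k) : ℝ))

-- basic lemmas
lemma P_zero (ε : ℝ) (x : ℤ) : P ε 0 x = if x = 0 then 1 else 0 := by rw [P]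

lemma P_succ (ε : ℝ) (n : ℕ) (x : ℤ) : P ε (n+1) x =
    P ε n (x + 1) * (1 / 2 - ((x : ℝ) + 1) * ε) +
      P ε n (x - 1) * (1 / 2 + ((x : ℝ) - 1) * ε) := by rw [P]

def snocEquiv (N : ℕ) : ((Fin N → Bool) × Bool) ≃ (Fin (N+1) → Bool) where
  toFun tb := Fin.snoc tb.1 tb.2
  invFun s := (Fin.init s, s (Fin.last N))
  left_inv := by rintro ⟨t, b⟩; simp
  right_inv := fun s => Fin.snoc_init_self s

lemma sum_snoc {N : ℕ} (g : (Fin (N+1) → Bool) → ℝ) :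
    ∑ s : Fin (N+1) → Bool, g s = ∑ t : Fin N → Bool, ∑ b : Bool, g (Fin.snoc t b) := by
  rw [← (snocEquiv N).sum_comp g, Fintype.sum_prod_type]
  rfl

lemma pos_filter {N : ℕ} (s : Fin N → Bool) (k : ℕ) :
    pos s k = ∑ j : Fin N, if (j : ℕ) < k then step (s j) else 0 :=
  Finset.sum_filter _ _

lemma pos_snoc {N : ℕ} (t : Fin N → Bool) (b : Bool) {k : ℕ} (hk : k ≤ N) :
    pos (Fin.snoc t b) k = pos t k := by
  rw [pos_filter, pos_filter, Fin.sum_univ_castSucc]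
  simp [Nat.not_lt.mpr hk]

lemma pos_snoc_top {N : ℕ} (t : Fin N → Bool) (b : Bool) :
    pos (Fin.snoc t b) (N+1) = pos t N + step b := by
  rw [pos_filter, pos_filter, Fin.sum_univ_castSucc]
  simp [Nat.lt_succ_of_lt]

lemma W_snoc (ε : ℝ) {N : ℕ} (t : Fin N → Bool) (b : Bool) :
    W ε (Fin.snoc t b) = W ε t * (1 / 2 + (pos t N : ℝ) * ε * (step b : ℝ)) := by
  rw [W, Fin.prod_univ_castSucc, W]
  congr 1
  · apply Finset.prod_congr rfl; intro k _
    rw [Fin.coe_castSucc, pos_snoc t b (le_of_lt k.isLt), Fin.snoc_castSucc]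
  · rw [Fin.val_last, pos_snoc t b le_rfl, Fin.snoc_last]

lemma snoc_lt {N : ℕ} (t : Fin N → Bool) (b : Bool) {i : ℕ} (h : i < N) (h' : i < N+1) :
    (Fin.snoc t b : Fin (N+1) → Bool) ⟨i, h'⟩ = t ⟨i, h⟩ := by
  have e : (⟨i, h'⟩ : Fin (N+1)) = Fin.castSucc ⟨i, h⟩ := rfl
  rw [e, Fin.snoc_castSucc]
noncomputable def A (ε : ℝ) (N : ℕ) (f : ℤ → ℝ) : ℝ :=
  ∑ s : Fin N → Bool, f (pos s N) * W ε s

lemma A_congr (ε : ℝ) (N : ℕ) {f g : ℤ → ℝ} (h : ∀ x, f x = g x) : A ε N f = A ε N g := by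
  unfold A; exact Finset.sum_congr rfl fun s _ => by rw [h]

lemma A_zero (ε : ℝ) (f : ℤ → ℝ) : A ε 0 f = f 0 := by
  rw [A, Fintype.sum_unique]
  simp [pos, W]

lemma A_succ (ε : ℝ) (N : ℕ) (f : ℤ → ℝ) :
    A ε (N+1) f = A ε N (fun x =>
      f (x+1) * (1/2 + (x:ℝ)*ε) + f (x-1) * (1/2 - (x:ℝ)*ε)) := by
  rw [A, sum_snoc]
  unfold A
  apply Finset.sum_congr rfl
  intro t _
  rw [Fintype.sum_bool]
  rw [pos_snoc_top, pos_snoc_top, W_snoc, W_snoc]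
  simp only [step]
  push_cast
  ring

lemma A_one (ε : ℝ) (N : ℕ) : A ε N (fun _ => 1) = 1 := by
  induction N with
  | zero => rw [A_zero]
  | succ n ih =>
    rw [A_succ]
    have : A ε n (fun x => (1:ℝ) * (1/2 + (x:ℝ)*ε) + 1 * (1/2 - (x:ℝ)*ε)) = A ε n (fun _ => 1) :=
      A_congr _ _ (fun x => by ring)
    rw [this, ih]

lemma A_add (ε : ℝ) (N : ℕ) (f g : ℤ → ℝ) :
    A ε N (fun x => f x + g x) = A ε N f + A ε N g := by
  unfold A
  rw [← Finset.sum_add_distrib]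
  exact Finset.sum_congr rfl fun s _ => by ring

lemma A_smul (ε c : ℝ) (N : ℕ) (f : ℤ → ℝ) :
    A ε N (fun x => c * f x) = c * A ε N f := by
  unfold A
  rw [Finset.mul_sum]
  exact Finset.sum_congr rfl fun s _ => by ring

lemma Pvanish (ε : ℝ) : ∀ (n : ℕ) (x : ℤ), (x < -(n:ℤ) ∨ (n:ℤ) < x) → P ε n x = 0 := by
  intro n
  induction n with
  | zero => intro x hx; rw [P_zero, if_neg (by omega)]
  | succ n ih =>
    intro x hx
    rw [P_succ, ih (x+1) (by push_cast at hx ⊢; omega), ih (x-1) (by push_cast at hx ⊢; omega)]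
    ring

lemma summable_P_mul (ε : ℝ) (n : ℕ) (c : ℤ) (g : ℤ → ℝ) :
    Summable (fun x : ℤ => P ε n (x + c) * g x) := by
  apply summable_of_ne_finset_zero (s := Finset.Icc (-(n:ℤ)-c) ((n:ℤ)-c))
  intro x hx
  rw [Finset.mem_Icc] at hx
  rw [Pvanish ε n (x+c) (by omega), zero_mul]

lemma bridge (ε : ℝ) : ∀ (n : ℕ) (f : ℤ → ℝ), ∑' x : ℤ, P ε n x * f x = A ε n f := by
  intro n
  induction n with
  | zero =>
    intro f
    rw [A_zero, tsum_eq_single (0:ℤ) (fun x hx => by rw [P_zero, if_neg hx, zero_mul])]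
    rw [P_zero, if_pos rfl, one_mul]
  | succ n ih =>
    intro f
    have h1 : Summable (fun x : ℤ => P ε n (x + 1) * ((1/2 - ((x:ℝ)+1)*ε) * f x)) :=
      summable_P_mul ε n 1 _
    have h2 : Summable (fun x : ℤ => P ε n (x + (-1)) * ((1/2 + ((x:ℝ)-1)*ε) * f x)) :=
      summable_P_mul ε n (-1) _
    have e1 : ∑' x : ℤ, P ε (n+1) x * f x
        = (∑' x : ℤ, P ε n (x + 1) * ((1/2 - ((x:ℝ)+1)*ε) * f x))
        + ∑' x : ℤ, P ε n (x + (-1)) * ((1/2 + ((x:ℝ)-1)*ε) * f x) := by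
      rw [← Summable.tsum_add h1 h2]
      apply tsum_congr
      intro x
      rw [P_succ]
      rw [show x + (-1) = x - 1 by ring]
      ring
    rw [e1]
    -- shift the two sums
    have s1 : ∑' x : ℤ, P ε n (x + 1) * ((1/2 - ((x:ℝ)+1)*ε) * f x)
        = ∑' y : ℤ, P ε n y * ((1/2 - (y:ℝ)*ε) * f (y - 1)) := by
      rw [← (Equiv.addRight (1:ℤ)).tsum_eq (fun y => P ε n y * ((1/2 - (y:ℝ)*ε) * f (y - 1)))]
      apply tsum_congr
      intro x
      simp only [Equiv.coe_addRight]
      push_cast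
      ring_nf
    have s2 : ∑' x : ℤ, P ε n (x + (-1)) * ((1/2 + ((x:ℝ)-1)*ε) * f x)
        = ∑' y : ℤ, P ε n y * ((1/2 + (y:ℝ)*ε) * f (y + 1)) := by
      rw [← (Equiv.addRight (-1:ℤ)).tsum_eq (fun y => P ε n y * ((1/2 + (y:ℝ)*ε) * f (y + 1)))]
      apply tsum_congr
      intro x
      simp only [Equiv.coe_addRight]
      push_cast
      ring_nf
    rw [s1, s2]
    have h1' : Summable (fun y : ℤ => P ε n y * ((1/2 - (y:ℝ)*ε) * f (y - 1))) := by
      have := summable_P_mul ε n 0 (fun y => (1/2 - (y:ℝ)*ε) * f (y - 1))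
      simpa using this
    have h2' : Summable (fun y : ℤ => P ε n y * ((1/2 + (y:ℝ)*ε) * f (y + 1))) := by
      have := summable_P_mul ε n 0 (fun y => (1/2 + (y:ℝ)*ε) * f (y + 1))
      simpa using this
    rw [← Summable.tsum_add h1' h2']
    have e2 : ∑' y : ℤ, (P ε n y * ((1/2 - (y:ℝ)*ε) * f (y - 1)) + P ε n y * ((1/2 + (y:ℝ)*ε) * f (y + 1)))
        = ∑' y : ℤ, P ε n y * (f (y+1) * (1/2 + (y:ℝ)*ε) + f (y-1) * (1/2 - (y:ℝ)*ε)) := by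
      apply tsum_congr; intro y; ring
    rw [e2, ih, ← A_succ]
lemma tail_step (ε : ℝ) {N i j : ℕ} (hi : i < N) (hj : j < N) :
    (∑ s : Fin (N+1) → Bool,
      (step (s ⟨i, by omega⟩) : ℝ) * (step (s ⟨j, by omega⟩) : ℝ) * W ε s)
    = ∑ s : Fin N → Bool, (step (s ⟨i, hi⟩) : ℝ) * (step (s ⟨j, hj⟩) : ℝ) * W ε s := by
  rw [sum_snoc]
  apply Finset.sum_congr rfl
  intro t _
  rw [Fintype.sum_bool, snoc_lt t true hi, snoc_lt t true hj, snoc_lt t false hi,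
    snoc_lt t false hj, W_snoc, W_snoc]
  simp only [step]
  push_cast
  ring

noncomputable def Phi (ε : ℝ) (i m : ℕ) (h : i < m) : ℝ :=
  ∑ t : Fin m → Bool, (step (t ⟨i, h⟩) : ℝ) * ((pos t m : ℤ) : ℝ) * W ε t

lemma Phi_succ (ε : ℝ) {i m : ℕ} (h : i < m) (h' : i < m+1) :
    Phi ε i (m+1) h' = (1 + 2*ε) * Phi ε i m h := by
  rw [Phi, sum_snoc, Phi, Finset.mul_sum]
  apply Finset.sum_congr rfl
  intro t _
  rw [Fintype.sum_bool, snoc_lt t true h, snoc_lt t false h, pos_snoc_top, pos_snoc_top,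
    W_snoc, W_snoc]
  simp only [step]
  push_cast
  ring

lemma last_step (ε : ℝ) {i K : ℕ} (h : i < K) :
    (∑ s : Fin (K+1) → Bool,
      (step (s ⟨i, by omega⟩) : ℝ) * (step (s ⟨K, by omega⟩) : ℝ) * W ε s)
    = 2 * ε * Phi ε i K h := by
  rw [sum_snoc, Phi, Finset.mul_sum]
  apply Finset.sum_congr rfl
  intro t _
  rw [Fintype.sum_bool]
  have e : (⟨K, by omega⟩ : Fin (K+1)) = Fin.last K := rfl
  rw [e, Fin.snoc_last, Fin.snoc_last, snoc_lt t true h, snoc_lt t false h, W_snoc, W_snoc]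
  simp only [step]
  push_cast
  ring

lemma Phi_base (ε : ℝ) (i : ℕ) :
    Phi ε i (i+1) (Nat.lt_succ_self i) = A ε i (fun x => 1 + 2*ε*(x:ℝ)^2) := by
  rw [Phi, sum_snoc, A]
  apply Finset.sum_congr rfl
  intro u _
  rw [Fintype.sum_bool]
  have e : (⟨i, Nat.lt_succ_self i⟩ : Fin (i+1)) = Fin.last i := rfl
  rw [e, Fin.snoc_last, Fin.snoc_last, pos_snoc_top, pos_snoc_top, W_snoc, W_snoc]
  simp only [step]
  push_cast
  ring

lemma Phi_pow (ε : ℝ) (i : ℕ) :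
    ∀ d, Phi ε i (i+1+d) (by omega) = (1+2*ε)^d * Phi ε i (i+1) (Nat.lt_succ_self i) := by
  intro d
  induction d with
  | zero => rw [pow_zero, one_mul]
  | succ d ih =>
    have h : i < i+1+d := by omega
    exact (Phi_succ ε h (by omega)).trans (by rw [ih]; ring)

lemma at_exact (ε : ℝ) (i K : ℕ) (h : i < K) :
    (∑ s : Fin (K+1) → Bool,
      (step (s ⟨i, by omega⟩) : ℝ) * (step (s ⟨K, by omega⟩) : ℝ) * W ε s)
    = 2*ε*(1+2*ε)^(K-(i+1)) * A ε i (fun x => 1 + 2*ε*(x:ℝ)^2) := by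
  rw [last_step ε h]
  obtain ⟨d, rfl⟩ : ∃ d, K = i+1+d := ⟨K - (i+1), by omega⟩
  have hd : i+1+d-(i+1) = d := by omega
  rw [hd, Phi_pow, Phi_base]
  ring

lemma reduce (ε : ℝ) (i j : ℕ) (hij : i < j) : ∀ M,
    (∑ s : Fin (j+1+M) → Bool,
      (step (s ⟨i, by omega⟩) : ℝ) * (step (s ⟨j, by omega⟩) : ℝ) * W ε s)
    = ∑ s : Fin (j+1) → Bool,
      (step (s ⟨i, by omega⟩) : ℝ) * (step (s ⟨j, by omega⟩) : ℝ) * W ε s := by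
  intro M
  induction M with
  | zero => rfl
  | succ M ih => exact (tail_step (N := j+1+M) ε (by omega) (by omega)).trans ih


/-- exact auto-correlation of increments: for `L ≥ 2` and `n + L ≤ N`,
`Σ_s s_{n+1} · s_{n+L} · W(s) = 2ε · (1+2ε)^{L−2} · (1 + 2ε·m₂(n))` where
`m₂(n) = Σ_{x ∈ ℤ} x² · P(n, x)` (here `s_{n+1}` and `s_{n+L}` are the steps at
0-based indices `n` and `n+L−1`). -/
theorem autocorrelation_exact (ε : ℝ) (n L N : ℕ) (hL : 2 ≤ L) (hnL : n + L ≤ N) :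
    (∑ s : Fin N → Bool,
        (step (s ⟨n, by omega⟩) : ℝ) * (step (s ⟨n + L - 1, by omega⟩) : ℝ) * W ε s) =
      2 * ε * (1 + 2 * ε) ^ (L - 2) * (1 + 2 * ε * ∑' x : ℤ, (x : ℝ) ^ 2 * P ε n x) := by
  obtain ⟨K, rfl⟩ : ∃ K, L = K + 2 := ⟨L - 2, by omega⟩
  obtain ⟨M, rfl⟩ : ∃ M, N = n + K + 2 + M := ⟨N - (n+K+2), by omega⟩
  have h4 : A ε n (fun x => 1 + 2*ε*(x:ℝ)^2) = 1 + 2*ε*∑' x : ℤ, (x:ℝ)^2 * P ε n x := by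
    have e : A ε n (fun x => 1 + 2*ε*(x:ℝ)^2)
        = A ε n (fun _ => 1) + 2*ε * A ε n (fun x => (x:ℝ)^2) := by
      rw [← A_smul, ← A_add]
    rw [e, A_one, ← bridge ε n (fun x => (x:ℝ)^2)]
    congr 2
    apply tsum_congr
    intro x
    ring
  have h1 := reduce ε n (n+K+1) (by omega) M
  have h2 := at_exact ε n (n+K+1) (by omega)
  have hd : n+K+1-(n+1) = K := by omega
  rw [hd] at h2
  calc (∑ s : Fin (n+K+2+M) → Bool,
        (step (s ⟨n, by omega⟩) : ℝ) * (step (s ⟨n + (K+2) - 1, by omega⟩) : ℝ) * W ε s)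
      = ∑ s : Fin ((n+K+1)+1) → Bool,
        (step (s ⟨n, by omega⟩) : ℝ) * (step (s ⟨n+K+1, by omega⟩) : ℝ) * W ε s := h1
    _ = 2*ε*(1+2*ε)^K * A ε n (fun x => 1 + 2*ε*(x:ℝ)^2) := h2
    _ = 2 * ε * (1 + 2 * ε) ^ (K + 2 - 2) * (1 + 2 * ε * ∑' x : ℤ, (x : ℝ) ^ 2 * P ε n x) := by
        rw [h4]
        norm_num
end
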